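/- Let M be an invertible p×p real matrix, let A = M·(0,1)^p be the image under M of the open unit cube, and let v ∈ ℝ^p with ‖v‖ ≤ η. Then the Lebesgue measure of the symmetric difference A △ (A + v) is at most 2p·|det M|·‖M^{−1}‖·η, where ‖M^{−1}‖ is the operator norm of M^{−1} and A + v = {a + v : a ∈ A}. -/

import Mathlib

/-!
Write `v = M w` with `w = M⁻¹ v`. Then `A + v = M (C + w)` for the open unit cube `C`, and
since `M` is injective, `A △ (A + v) = M (C △ (C + w))`, whose volume is `|det M|` times that
of `C △ (C + w)`. A point of `C` outside `C + w` leaves the cube in some coordinate `i`, so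
`C \ (C + w)` is covered by slabs of volume `|w i|`; likewise `(C + w) \ C` is a translate of
`C \ (C - w)`. Hence the volume of `C △ (C + w)` is at most
`2 ∑ |w i| ≤ 2 p ‖w‖ ≤ 2 p ‖M⁻¹‖ η`.
-/

open MeasureTheory Matrix

noncomputable section

def vnorm {ι : Type*} [Fintype ι] (v : ι → ℝ) : ℝ := Real.sqrt (∑ i, v i ^ 2)

def opNorm {p : ℕ} (M : Matrix (Fin p) (Fin p) ℝ) : ℝ :=
  sSup ((fun v => vnorm (M.mulVec v)) '' {v | vnorm v ≤ 1})

open Set Function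

theorem vnorm_eq_norm_toLp {ι : Type*} [Fintype ι] (v : ι → ℝ) :
    vnorm v = ‖WithLp.toLp 2 v‖ := by
  simp [vnorm, EuclideanSpace.norm_eq]

theorem abs_apply_le_vnorm {ι : Type*} [Fintype ι] (v : ι → ℝ) (i : ι) :
    |v i| ≤ vnorm v := by
  simpa [vnorm_eq_norm_toLp] using PiLp.norm_apply_le (WithLp.toLp 2 v) i

theorem opNorm_eq_norm_toEuclideanCLM {p : ℕ} (N : Matrix (Fin p) (Fin p) ℝ) :
    opNorm N = ‖toEuclideanCLM (𝕜 := ℝ) N‖ := by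
  rw [← ContinuousLinearMap.sSup_unitClosedBall_eq_norm]
  have hball : {v : Fin p → ℝ | vnorm v ≤ 1}
      = WithLp.ofLp '' Metric.closedBall (0 : EuclideanSpace ℝ (Fin p)) 1 := by
    ext v
    refine ⟨fun hv => ⟨WithLp.toLp 2 v, by simpa [vnorm_eq_norm_toLp] using hv, rfl⟩, ?_⟩
    rintro ⟨x, hx, rfl⟩
    simpa [vnorm_eq_norm_toLp] using hx
  rw [opNorm, hball, image_image]
  congr 1
  exact image_congr fun x _ => vnorm_eq_norm_toLp _

theorem opNorm_nonneg {p : ℕ} (N : Matrix (Fin p) (Fin p) ℝ) : 0 ≤ opNorm N := by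
  rw [opNorm_eq_norm_toEuclideanCLM]
  exact norm_nonneg _

theorem vnorm_mulVec_le {p : ℕ} (N : Matrix (Fin p) (Fin p) ℝ) (v : Fin p → ℝ) :
    vnorm (N *ᵥ v) ≤ opNorm N * vnorm v := by
  simpa [opNorm_eq_norm_toEuclideanCLM, vnorm_eq_norm_toLp] using
    (toEuclideanCLM (𝕜 := ℝ) N).le_opNorm (WithLp.toLp 2 v)

theorem Set.pi_univ_sdiff_pi_univ_subset {ι : Type*} {α : ι → Type*} [DecidableEq ι]
    (s t : ∀ i, Set (α i)) :
    pi univ s \ pi univ t ⊆ ⋃ i, pi univ (update s i (s i \ t i)) := by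
  rintro x ⟨hs, ht⟩
  simp only [mem_pi, mem_univ, true_implies, not_forall] at hs ht
  obtain ⟨i, hi⟩ := ht
  refine mem_iUnion.2 ⟨i, fun j _ => ?_⟩
  rcases eq_or_ne j i with rfl | hj
  · simpa using ⟨hs j, hi⟩
  · simpa [hj] using hs j

theorem Set.image_add_right_pi_univ {ι : Type*} {α : ι → Type*} [∀ i, AddGroup (α i)]
    (s : ∀ i, Set (α i)) (u : ∀ i, α i) :
    (· + u) '' pi univ s = pi univ fun i => (· + u i) '' s i := by
  ext x
  simp [Set.image_add_right]

theorem volume_Ioo_sdiff_add_image_le (a : ℝ) :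
    volume (Ioo (0 : ℝ) 1 \ (· + a) '' Ioo 0 1) ≤ ENNReal.ofReal |a| := by
  rw [image_add_const_Ioo, zero_add]
  rcases le_total 0 a with ha | ha
  · calc volume (Ioo (0 : ℝ) 1 \ Ioo a (1 + a)) ≤ volume (Ioc 0 a) := by
          refine measure_mono fun x ⟨⟨h0, h1⟩, h⟩ => ⟨h0, ?_⟩
          by_contra! hx
          exact h ⟨hx, by linarith⟩
      _ = ENNReal.ofReal |a| := by rw [Real.volume_Ioc, sub_zero, abs_of_nonneg ha]
  · calc volume (Ioo (0 : ℝ) 1 \ Ioo a (1 + a)) ≤ volume (Ico (1 + a) 1) := by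
          refine measure_mono fun x ⟨⟨h0, h1⟩, h⟩ => ⟨?_, h1⟩
          by_contra! hx
          exact h ⟨by linarith, hx⟩
      _ = ENNReal.ofReal |a| := by rw [Real.volume_Ico, abs_of_nonpos ha]; ring_nf

theorem MeasureTheory.measure_symmDiff_add_image_le {G : Type*} [AddGroup G] [MeasurableSpace G]
    [MeasurableAdd G] (μ : Measure G) [μ.IsAddRightInvariant] (s : Set G) (w : G) :
    μ (symmDiff s ((· + w) '' s)) ≤ μ (s \ (· + w) '' s) + μ (s \ (· + -w) '' s) := by
  have hback : (· + w) '' s \ s = (· + w) '' (s \ (· + -w) '' s) := by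
    rw [image_sdiff (add_left_injective w), image_image]
    simp
  calc μ (symmDiff s ((· + w) '' s)) ≤ μ (s \ (· + w) '' s) + μ ((· + w) '' s \ s) :=
        measure_union_le _ _
    _ = μ (s \ (· + w) '' s) + μ (s \ (· + -w) '' s) := by
        have h := measure_preimage_add_right μ (-w) (s \ (· + -w) '' s)
        rw [← image_add_right] at h
        rw [hback, h]

def openUnitCube (ι : Type*) : Set (ι → ℝ) := univ.pi fun _ => Ioo 0 1

theorem volume_openUnitCube_sdiff_add_image_le {ι : Type*} [Fintype ι] (u : ι → ℝ) :
    volume (openUnitCube ι \ (· + u) '' openUnitCube ι) ≤ ENNReal.ofReal (∑ i, |u i|) := by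
  classical
  rw [ENNReal.ofReal_sum_of_nonneg fun i _ => abs_nonneg _, openUnitCube,
    image_add_right_pi_univ]
  refine (measure_mono (pi_univ_sdiff_pi_univ_subset _ _)).trans <|
    (measure_iUnion_fintype_le _ _).trans <| Finset.sum_le_sum fun i _ => ?_
  rw [volume_pi_pi]
  simp only [apply_update (fun _ (t : Set ℝ) => volume t), Real.volume_Ioo, sub_zero,
    ENNReal.ofReal_one, Finset.prod_update_of_mem (Finset.mem_univ i), Finset.prod_const_one,
    mul_one]
  exact volume_Ioo_sdiff_add_image_le (u i)

theorem volume_openUnitCube_symmDiff_add_image_le {ι : Type*} [Fintype ι] (w : ι → ℝ) :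
    volume (symmDiff (openUnitCube ι) ((· + w) '' openUnitCube ι))
      ≤ ENNReal.ofReal (2 * ∑ i, |w i|) := by
  calc _ ≤ _ := measure_symmDiff_add_image_le volume _ w
    _ ≤ ENNReal.ofReal (∑ i, |w i|) + ENNReal.ofReal (∑ i, |(-w) i|) :=
        add_le_add (volume_openUnitCube_sdiff_add_image_le w)
          (volume_openUnitCube_sdiff_add_image_le (-w))
    _ = ENNReal.ofReal (2 * ∑ i, |w i|) := by
        simp only [Pi.neg_apply, abs_neg]
        rw [← ENNReal.ofReal_add (by positivity) (by positivity), two_mul]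

theorem sum_abs_le_card_mul_vnorm {ι : Type*} [Fintype ι] (v : ι → ℝ) :
    ∑ i, |v i| ≤ Fintype.card ι * vnorm v := by
  simpa using Finset.sum_le_card_nsmul Finset.univ _ _ fun i _ => abs_apply_le_vnorm v i

theorem volume_image_mulVec {ι : Type*} [Fintype ι] [DecidableEq ι] (M : Matrix ι ι ℝ)
    (s : Set (ι → ℝ)) : volume (M.mulVec '' s) = ENNReal.ofReal |M.det| * volume s := by
  rw [← LinearMap.det_toLin', ← Measure.addHaar_image_linearMap]
  rfl

/-- Volume of the symmetric difference of a parallelepiped A = M(0,1)^p and its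
translate A + v: at most 2p·|det M|·‖M⁻¹‖·η when ‖v‖ ≤ η. -/
theorem symmDiff_parallelepiped_translate {p : ℕ}
    (M : Matrix (Fin p) (Fin p) ℝ) (hM : IsUnit M.det)
    (v : Fin p → ℝ) (η : ℝ) (hv : vnorm v ≤ η) :
    volume (symmDiff (M.mulVec '' Set.pi Set.univ fun _ => Set.Ioo (0 : ℝ) 1)
        ((· + v) '' (M.mulVec '' Set.pi Set.univ fun _ => Set.Ioo (0 : ℝ) 1)))
      ≤ ENNReal.ofReal (2 * p * |M.det| * opNorm M⁻¹ * η) := by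
  change volume (symmDiff (M.mulVec '' openUnitCube (Fin p))
    ((· + v) '' (M.mulVec '' openUnitCube (Fin p)))) ≤ _
  set C := openUnitCube (Fin p)
  set w := M⁻¹ *ᵥ v
  have hMw : M *ᵥ w = v := by rw [mulVec_mulVec, mul_nonsing_inv M hM, one_mulVec]
  have hinj : Injective M.mulVec := mulVec_injective_iff_isUnit.2 ((isUnit_iff_isUnit_det M).2 hM)
  have htranslate : (· + v) '' (M.mulVec '' C) = M.mulVec '' ((· + w) '' C) := by
    simp only [image_image, mulVec_add, hMw]
  have hsum : ∑ i, |w i| ≤ p * (opNorm M⁻¹ * η) := by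
    have hw : vnorm w ≤ opNorm M⁻¹ * η :=
      (vnorm_mulVec_le _ v).trans (mul_le_mul_of_nonneg_left hv (opNorm_nonneg _))
    simpa using
      (sum_abs_le_card_mul_vnorm w).trans (mul_le_mul_of_nonneg_left hw (Nat.cast_nonneg _))
  calc _ = volume (M.mulVec '' symmDiff C ((· + w) '' C)) := by
        rw [image_symmDiff hinj, htranslate]
    _ = ENNReal.ofReal |M.det| * volume (symmDiff C ((· + w) '' C)) := volume_image_mulVec M _
    _ ≤ ENNReal.ofReal |M.det| * ENNReal.ofReal (2 * ∑ i, |w i|) :=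
        mul_le_mul_right (volume_openUnitCube_symmDiff_add_image_le w) _
    _ = ENNReal.ofReal (|M.det| * (2 * ∑ i, |w i|)) := (ENNReal.ofReal_mul (abs_nonneg _)).symm
    _ ≤ ENNReal.ofReal (|M.det| * (2 * (p * (opNorm M⁻¹ * η)))) := by gcongr
    _ = ENNReal.ofReal (2 * p * |M.det| * opNorm M⁻¹ * η) := by ring_nf

end
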